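/- In the multipoint model, let p be a site with existence probability entries; fix a query q ∈ ℝ^2 and a site p_i^j. The probability that the segment q p_i^j is the witness edge of q ∉ conv(B) equals γ_i^j · ∏_{k ≠ i} (1 − ∑_{l : p_k^l ∈ G_{i,j}} γ_k^l), where G_{i,j} is the set of sites strictly right of the oriented line from q through p_i^j. -/

import Mathlib

attribute [local instance] Classical.propDecidable

noncomputable section

abbrev E2 := EuclideanSpace ℝ (Fin 2)

/-- The 2D cross product: `s` is strictly to the right of the oriented line from
`q` through `p` iff `cross2 (p - q) (s - q) < 0`. -/
def cross2 (a b : E2) : ℝ := a 0 * b 1 - a 1 * b 0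

/-- The set of possible outcomes in the multipoint model: for each uncertain point
`k`, either one of its sites is realized or none is. -/
def outcomes (m : ℕ) (Pm : Fin m → Finset E2) :
    Finset (∀ k ∈ (Finset.univ : Finset (Fin m)), Option E2) :=
  Finset.univ.pi (fun k => insert (none : Option E2) ((Pm k).image some))

/-- The probability of an outcome: independently, uncertain point `k` realizes
site `s` with probability `γ k s`, and no site with the remaining probability. -/
def outcomeProb (m : ℕ) (Pm : Fin m → Finset E2) (γ : Fin m → E2 → ℝ)
    (f : ∀ k ∈ (Finset.univ : Finset (Fin m)), Option E2) : ℝ :=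
  ∏ k : Fin m, Option.elim (f k (Finset.mem_univ k)) (1 - ∑ s ∈ Pm k, γ k s) (γ k)

/-! The event that `q pᵢʲ` is the witness edge is an intersection of one event per uncertain
point: `i` realizes `pᵢʲ`, and every point realizes either nothing or a site not strictly right
of the line `q → pᵢʲ` (`pᵢʲ` itself lies on it). Since the points are independent, its
probability is the product of the per-point probabilities, `γᵢʲ` for `i` and
`1 − ∑_{l : p_k^l ∈ G_{i,j}} γ_k^l` for `k ≠ i`. -/

open Finset

lemma Finset.sum_insert_none_image_some {α M : Type*} [DecidableEq α] [AddCommMonoid M]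
    (s : Finset α) (h : Option α → M) :
    ∑ x ∈ insert none (s.image some), h x = h none + ∑ a ∈ s, h (some a) := by
  rw [sum_insert (by simp), sum_image fun _ _ _ _ h => Option.some_injective _ h]

lemma sum_outcomes_prod {R : Type*} [CommSemiring R] (m : ℕ) (Pm : Fin m → Finset E2)
    (g : Fin m → Option E2 → R) :
    ∑ f ∈ outcomes m Pm, ∏ k, g k (f k (mem_univ k)) =
      ∏ k, (g k none + ∑ s ∈ Pm k, g k (some s)) := by
  simp_rw [← sum_insert_none_image_some, prod_sum, outcomes, ← univ.prod_attach]

lemma ite_outcomeProb_eq_prod (m : ℕ) (Pm : Fin m → Finset E2) (γ : Fin m → E2 → ℝ)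
    (P : Fin m → Option E2 → Prop) (f : ∀ k ∈ (univ : Finset (Fin m)), Option E2) :
    (if ∀ k, P k (f k (mem_univ k)) then outcomeProb m Pm γ f else 0) =
      ∏ k, if P k (f k (mem_univ k)) then
        Option.elim (f k (mem_univ k)) (1 - ∑ s ∈ Pm k, γ k s) (γ k) else 0 := by
  rw [Fintype.prod_ite_zero, outcomeProb]
  -- the two sides differ only in their `Decidable` instances
  congr

lemma cross2_self (a : E2) : cross2 a a = 0 :=
  sub_eq_zero.2 (mul_comm _ _)

variable {m : ℕ} (Pm : Fin m → Finset E2) (γ : Fin m → E2 → ℝ) (q pij : E2) (i : Fin m)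

def WitnessCompatible (k : Fin m) (x : Option E2) : Prop :=
  (k = i → x = some pij) ∧ ∀ s, x = some s → 0 ≤ cross2 (pij - q) (s - q)

def witnessWeight (k : Fin m) (x : Option E2) : ℝ :=
  if WitnessCompatible q pij i k x then Option.elim x (1 - ∑ s ∈ Pm k, γ k s) (γ k) else 0

lemma witnessEvent_iff (f : ∀ k ∈ (univ : Finset (Fin m)), Option E2) :
    (f i (mem_univ i) = some pij ∧
        ∀ k s, f k (mem_univ k) = some s → 0 ≤ cross2 (pij - q) (s - q)) ↔
      ∀ k, WitnessCompatible q pij i k (f k (mem_univ k)) := by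
  simp [WitnessCompatible, forall_and]

lemma witnessWeight_sum_self (hpij : pij ∈ Pm i) :
    witnessWeight Pm γ q pij i i none + ∑ s ∈ Pm i, witnessWeight Pm γ q pij i i (some s) =
      γ i pij := by
  have hsome (s : E2) :
      witnessWeight Pm γ q pij i i (some s) = if s = pij then γ i pij else 0 := by
    by_cases hs : s = pij
    · subst hs; simp [witnessWeight, WitnessCompatible, cross2_self]
    · simp [witnessWeight, WitnessCompatible, hs]
  have hnone : witnessWeight Pm γ q pij i i none = 0 := by simp [witnessWeight, WitnessCompatible]
  rw [hnone, zero_add, sum_congr rfl fun s _ => hsome s]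
  simp [hpij]

lemma witnessWeight_sum_of_ne {k : Fin m} (hk : k ≠ i) :
    witnessWeight Pm γ q pij i k none + ∑ s ∈ Pm k, witnessWeight Pm γ q pij i k (some s) =
      1 - ∑ s ∈ (Pm k).filter (fun s => cross2 (pij - q) (s - q) < 0), γ k s := by
  have hnone : witnessWeight Pm γ q pij i k none = 1 - ∑ s ∈ Pm k, γ k s := by
    simp [witnessWeight, WitnessCompatible, hk]
  have hsome : ∑ s ∈ Pm k, witnessWeight Pm γ q pij i k (some s) =
      ∑ s ∈ (Pm k).filter (fun s => ¬ cross2 (pij - q) (s - q) < 0), γ k s := by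
    rw [sum_filter]
    simp [witnessWeight, WitnessCompatible, hk]
  rw [hnone, hsome, ← sum_filter_add_sum_filter_not (Pm k) fun s => cross2 (pij - q) (s - q) < 0]
  ring

theorem witness_edge_prob_multipoint_general
    (m : ℕ) (Pm : Fin m → Finset E2) (γ : Fin m → E2 → ℝ)
    (q : E2)
    (i : Fin m) (pij : E2) (hpij : pij ∈ Pm i) :
    (∑ f ∈ outcomes m Pm,
      if f i (Finset.mem_univ i) = some pij ∧
          (∀ k : Fin m, ∀ s : E2, f k (Finset.mem_univ k) = some s →
            0 ≤ cross2 (pij - q) (s - q)) then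
        outcomeProb m Pm γ f else 0) =
    γ i pij *
      ∏ k ∈ Finset.univ.erase i,
        (1 - ∑ s ∈ (Pm k).filter (fun s => cross2 (pij - q) (s - q) < 0), γ k s) := by
  calc _ = ∑ f ∈ outcomes m Pm, ∏ k, witnessWeight Pm γ q pij i k (f k (mem_univ k)) :=
        sum_congr rfl fun f _ =>
          (if_congr (witnessEvent_iff q pij i f) rfl rfl).trans (ite_outcomeProb_eq_prod ..)
    _ = ∏ k, (witnessWeight Pm γ q pij i k none +
          ∑ s ∈ Pm k, witnessWeight Pm γ q pij i k (some s)) := sum_outcomes_prod ..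
    _ = _ := by
      rw [← mul_prod_erase _ _ (mem_univ i), witnessWeight_sum_self Pm γ q pij i hpij]
      exact congrArg _ <| prod_congr rfl fun k hk =>
        witnessWeight_sum_of_ne Pm γ q pij i (ne_of_mem_erase hk)

/-- The probability that `q pᵢʲ` is the witness edge of `q ∉ conv(B)` equals
`γᵢʲ · ∏_{k ≠ i} (1 − ∑_{l : p_k^l ∈ G_{i,j}} γ_k^l)`, where `G_{i,j}` is the set
of sites strictly right of the oriented line from `q` through `pᵢʲ`. -/
theorem witness_edge_prob_multipoint
    (m : ℕ) (Pm : Fin m → Finset E2) (γ : Fin m → E2 → ℝ)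
    (hγ : ∀ k, ∀ s ∈ Pm k, 0 < γ k s ∧ γ k s ≤ 1)
    (hsum : ∀ k, ∑ s ∈ Pm k, γ k s ≤ 1)
    (hdisj : ∀ k l : Fin m, k ≠ l → Disjoint (Pm k) (Pm l))
    (q : E2) (hq : ∀ k, q ∉ Pm k)
    (hgp : ∀ s t : E2, (∃ k, s ∈ Pm k) → (∃ k, t ∈ Pm k) → s ≠ t →
      ¬ Collinear ℝ ({q, s, t} : Set E2))
    (i : Fin m) (pij : E2) (hpij : pij ∈ Pm i) :
    (∑ f ∈ outcomes m Pm,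
      if f i (Finset.mem_univ i) = some pij ∧
          (∀ k : Fin m, ∀ s : E2, f k (Finset.mem_univ k) = some s →
            0 ≤ cross2 (pij - q) (s - q)) then
        outcomeProb m Pm γ f else 0) =
    γ i pij *
      ∏ k ∈ Finset.univ.erase i,
        (1 - ∑ s ∈ (Pm k).filter (fun s => cross2 (pij - q) (s - q) < 0), γ k s) :=
  witness_edge_prob_multipoint_general m Pm γ q i pij hpij
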